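/- A vertex mapping f : V(G⃗) → V(H⃗) is a pushable homomorphism of the oriented graph G⃗ to H⃗ if and only if f preserves the directability of every ordered closed walk of G⃗: for each ordered closed walk C of G⃗, the image f(C) is an ordered closed walk of H⃗ whose orientation has the same parity of forward arcs (and same length parity consequence) as C. -/

import Mathlib

/-!
Record on each edge `uv` of `G⃗` the bit `c(u,v) ∈ ℤ/2` saying whether `f` maps the arc on
`uv` against its orientation. Pushing a vertex set `S` reverses exactly the arcs of the cut
`δ(S)`, so `f` is a pushable homomorphism iff it maps edges to edges and `c` is the coboundary
of the indicator of `S`. Along a closed walk, the sum of `c` is the difference of the numbers of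
forward arcs of the walk and of its image, and a `ℤ/2`-valued edge function is a coboundary iff
it sums to zero around every closed walk: the potential of a vertex is the sum along any walk
to it from a fixed root of its component.
-/

open Finset

namespace SimpleGraph

variable {V A : Type*} [AddCommGroup A] {G : SimpleGraph V} (c : V → V → A)

namespace Walk

def dartSum {u v : V} (p : G.Walk u v) : A := (p.darts.map fun d => c d.fst d.snd).sum

@[simp] lemma dartSum_nil {u : V} : (nil : G.Walk u u).dartSum c = 0 := rfl

@[simp] lemma dartSum_cons {u v w : V} (h : G.Adj u v) (p : G.Walk v w) :
    (cons h p).dartSum c = c u v + p.dartSum c := by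
  simp [dartSum]

@[simp] lemma dartSum_append {u v w : V} (p : G.Walk u v) (q : G.Walk v w) :
    (p.append q).dartSum c = p.dartSum c + q.dartSum c := by
  simp [dartSum]

@[simp] lemma dartSum_copy {u v u' v' : V} (p : G.Walk u v) (hu : u = u') (hv : v = v') :
    (p.copy hu hv).dartSum c = p.dartSum c := by
  subst hu hv
  rfl

lemma dartSum_reverse {c : V → V → A} (hc : ∀ u v, G.Adj u v → c v u = -c u v) {u v : V}
    (p : G.Walk u v) : p.reverse.dartSum c = -p.dartSum c := by
  induction p with
  | nil => simp
  | cons h p ih =>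
    rw [reverse_cons, dartSum_append, ih, dartSum_cons, dartSum_cons, dartSum_nil, hc _ _ h]
    abel

lemma dartSum_eq_sum_range_getVert {u v : V} (p : G.Walk u v) :
    p.dartSum c = ∑ k ∈ range p.length, c (p.getVert k) (p.getVert (k + 1)) := by
  induction p with
  | nil => simp
  | cons h p ih =>
    rw [dartSum_cons, ih, length_cons, sum_range_succ', add_comm]
    simp [getVert_cons_succ]

lemma getVert_val_finAdd_one {u : V} {n : ℕ} [NeZero n] (p : G.Walk u u) (hp : p.length = n)
    (i : Fin n) : p.getVert ↑(i + 1) = p.getVert (i + 1) := by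
  have hval : ((i + 1 : Fin n) : ℕ) = (i + 1) % n := by simp [Fin.val_add]
  rw [hval]
  rcases Nat.lt_or_ge (i + 1) n with hlt | hge
  · rw [Nat.mod_eq_of_lt hlt]
  · rw [show (i : ℕ) + 1 = n by omega, Nat.mod_self, getVert_zero, ← hp, getVert_length]

lemma dartSum_eq_sum_fin_getVert {u : V} {n : ℕ} [NeZero n] (p : G.Walk u u)
    (hp : p.length = n) :
    p.dartSum c = ∑ i : Fin n, c (p.getVert i) (p.getVert ↑(i + 1)) := by
  simp only [getVert_val_finAdd_one p hp,
    Fin.sum_univ_eq_sum_range (fun k => c (p.getVert k) (p.getVert (k + 1))), ← hp,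
    dartSum_eq_sum_range_getVert]

end Walk

variable {c}

lemma antisymm_of_dartSum_closed_eq_zero (hc : ∀ u (p : G.Walk u u), p.dartSum c = 0)
    {u v : V} (h : G.Adj u v) : c v u = -c u v := by
  have := hc u (.cons h (.cons h.symm .nil))
  simp only [Walk.dartSum_cons, Walk.dartSum_nil, add_zero] at this
  exact eq_neg_of_add_eq_zero_right this

lemma dartSum_eq_of_closed_eq_zero (hc : ∀ u (p : G.Walk u u), p.dartSum c = 0)
    {u v : V} (p q : G.Walk u v) : p.dartSum c = q.dartSum c := by
  have := hc u (p.append q.reverse)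
  rwa [Walk.dartSum_append,
    Walk.dartSum_reverse fun _ _ => antisymm_of_dartSum_closed_eq_zero hc, ← sub_eq_add_neg,
    sub_eq_zero] at this

theorem exists_potential_of_dartSum_closed_eq_zero
    (hc : ∀ u (p : G.Walk u u), p.dartSum c = 0) :
    ∃ s : V → A, ∀ u v, G.Adj u v → c u v = s v - s u := by
  have hroot (x : V) : G.Reachable (G.connectedComponentMk x).out x :=
    ConnectedComponent.exact (G.connectedComponentMk x).out_eq
  refine ⟨fun x => (hroot x).some.dartSum c, fun u v h => ?_⟩
  have hr : (G.connectedComponentMk u).out = (G.connectedComponentMk v).out := by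
    rw [ConnectedComponent.connectedComponentMk_eq_of_adj h]
  have := dartSum_eq_of_closed_eq_zero hc ((hroot u).some.concat h)
    ((hroot v).some.copy hr.symm rfl)
  simp only [Walk.concat, Walk.dartSum_append, Walk.dartSum_cons, Walk.dartSum_nil, add_zero,
    Walk.dartSum_copy] at this
  dsimp only
  rw [← this]
  abel

end SimpleGraph

lemma Fin.sum_sub_add_one_eq_zero {A : Type*} [AddCommGroup A] {n : ℕ} [NeZero n]
    (g : Fin n → A) : ∑ i, (g (i + 1) - g i) = 0 := by
  rw [sum_sub_distrib, sub_eq_zero]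
  exact Fintype.sum_equiv (Equiv.addRight 1) _ _ fun _ => rfl

def Bool.toZMod2 (b : Bool) : ZMod 2 := cond b 1 0

lemma Bool.toZMod2_decide_eq_one (a : ZMod 2) : (decide (a = 1)).toZMod2 = a := by
  fin_cases a <;> rfl

lemma natCast_card_filter_eq_sum_toZMod2 {ι : Type*} [Fintype ι] (p : ι → Bool) :
    ((univ.filter fun i => p i = true).card : ZMod 2) = ∑ i, (p i).toZMod2 := by
  rw [natCast_card_filter]
  exact sum_congr rfl fun i _ => by cases p i <;> rfl

namespace Pushable

/-- The pushable-homomorphism condition on the edge `{u, v}`, in both directions, with `a = s u`,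
`b = s v`, `duv = D u v`, `euv = E (f u) (f v)`. -/
lemma hom_on_edge_iff {duv dvu euv evu a b : Bool} (hd : duv = true → dvu = false)
    (hedge : duv = true ∨ dvu = true) (he : euv = true → evu = false) :
    ((cond (xor a b) dvu duv = true → euv = true) ∧ (cond (xor b a) duv dvu = true → evu = true))
      ↔ (euv = true ∨ evu = true) ∧ euv.toZMod2 - duv.toZMod2 = b.toZMod2 - a.toZMod2 := by
  decide +revert

lemma edge_of_cond_eq_true {b duv dvu : Bool} (h : cond b dvu duv = true) :
    duv = true ∨ dvu = true := by
  cases b <;> simp_all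

variable {U W : Type*} {D : U → U → Bool} {E : W → W → Bool} {f : U → W}

lemma ne_of_edge (hD : ∀ u v, D u v = true → D v u = false) {u v : U}
    (huv : D u v = true ∨ D v u = true) : u ≠ v := by
  rintro rfl
  obtain h | h := huv <;> simp [hD _ _ h] at h

def edgeTwist (D : U → U → Bool) (E : W → W → Bool) (f : U → W) (u v : U) : ZMod 2 :=
  (E (f u) (f v)).toZMod2 - (D u v).toZMod2

def PreservesClosedWalkParity (D : U → U → Bool) (E : W → W → Bool) (f : U → W) : Prop :=
  ∀ (n : ℕ) [NeZero n] (w : Fin n → U),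
    (∀ i : Fin n, D (w i) (w (i + 1)) = true ∨ D (w (i + 1)) (w i) = true) →
    ((∀ i : Fin n,
        E (f (w i)) (f (w (i + 1))) = true ∨ E (f (w (i + 1))) (f (w i)) = true) ∧
      (Finset.univ.filter fun i : Fin n => D (w i) (w (i + 1)) = true).card
        ≡ (Finset.univ.filter fun i : Fin n =>
            E (f (w i)) (f (w (i + 1))) = true).card [MOD 2])

lemma PreservesClosedWalkParity.image_edge (hf : PreservesClosedWalkParity D E f) {u v : U}
    (huv : D u v = true ∨ D v u = true) : E (f u) (f v) = true ∨ E (f v) (f u) = true := by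
  have := (hf 2 ![u, v] fun i => by fin_cases i <;> simpa [or_comm] using huv).1 0
  simpa using this

lemma PreservesClosedWalkParity.dartSum_edgeTwist_eq_zero
    (hf : PreservesClosedWalkParity D E f) {u : U}
    (p : (SimpleGraph.fromRel fun u v => D u v = true).Walk u u) :
    p.dartSum (edgeTwist D E f) = 0 := by
  rcases Nat.eq_zero_or_pos p.length with h0 | hpos
  · rw [p.dartSum_eq_sum_range_getVert, h0, sum_range_zero]
  have : NeZero p.length := ⟨hpos.ne'⟩
  have hadj (i : Fin p.length) := (SimpleGraph.fromRel_adj _ _ _).mp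
    ((p.getVert_val_finAdd_one rfl i).symm ▸ p.adj_getVert_succ i.isLt)
  have hmod := (hf p.length (fun i => p.getVert i) fun i => (hadj i).2).2
  rw [p.dartSum_eq_sum_fin_getVert _ rfl]
  simp only [edgeTwist, sum_sub_distrib, ← natCast_card_filter_eq_sum_toZMod2,
    (ZMod.natCast_eq_natCast_iff _ _ _).mpr hmod, sub_self]

end Pushable

/-- Canonical characterization of pushable homomorphisms. Oriented graphs are encoded by
their arc relations `D : U → U → Bool` and `E : W → W → Bool` (no reverse arcs). A vertex
map `f` is a pushable homomorphism (i.e. a homomorphism of some push-equivalent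
orientation, where pushing the set `{u | s u = true}` replaces the arc between `u` and `v`
by its reverse iff exactly one endpoint is in the set) iff `f` preserves the directability
of every ordered closed walk: the image of each ordered closed walk is an ordered closed
walk whose number of forward arcs has the same parity. -/
theorem stmt11 {U W : Type*} (D : U → U → Bool) (E : W → W → Bool)
    (hD : ∀ u v, D u v = true → D v u = false)
    (hE : ∀ u v, E u v = true → E v u = false)
    (f : U → W) :
    (∃ s : U → Bool, ∀ u v,
        (cond (Bool.xor (s u) (s v)) (D v u) (D u v)) = true → E (f u) (f v) = true)
    ↔ (∀ (n : ℕ) [NeZero n] (w : Fin n → U),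
        (∀ i : Fin n, D (w i) (w (i + 1)) = true ∨ D (w (i + 1)) (w i) = true) →
        ((∀ i : Fin n,
            E (f (w i)) (f (w (i + 1))) = true ∨ E (f (w (i + 1))) (f (w i)) = true) ∧
          (Finset.univ.filter fun i : Fin n => D (w i) (w (i + 1)) = true).card
            ≡ (Finset.univ.filter fun i : Fin n =>
                E (f (w i)) (f (w (i + 1))) = true).card [MOD 2])) := by
  constructor
  · rintro ⟨s, hs⟩ n _ w hw
    have hedge (i : Fin n) :=
      (Pushable.hom_on_edge_iff (hD _ _) (hw i) (hE _ _)).mp ⟨hs _ _, hs _ _⟩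
    refine ⟨fun i => (hedge i).1, (ZMod.natCast_eq_natCast_iff _ _ _).mp ?_⟩
    rw [natCast_card_filter_eq_sum_toZMod2, natCast_card_filter_eq_sum_toZMod2, eq_comm,
      ← sub_eq_zero, ← sum_sub_distrib, sum_congr rfl fun i _ => (hedge i).2]
    exact Fin.sum_sub_add_one_eq_zero fun i => (s (w i)).toZMod2
  · intro (hf : Pushable.PreservesClosedWalkParity D E f)
    obtain ⟨t, ht⟩ :=
      SimpleGraph.exists_potential_of_dartSum_closed_eq_zero fun _ => hf.dartSum_edgeTwist_eq_zero
    refine ⟨fun x => decide (t x = 1), fun u v huv => ?_⟩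
    have hedge := Pushable.edge_of_cond_eq_true huv
    refine ((Pushable.hom_on_edge_iff (hD u v) hedge (hE _ _)).mpr
      ⟨hf.image_edge hedge, ?_⟩).1 huv
    rw [Bool.toZMod2_decide_eq_one, Bool.toZMod2_decide_eq_one]
    exact ht u v ((SimpleGraph.fromRel_adj _ _ _).mpr ⟨Pushable.ne_of_edge hD hedge, hedge⟩)
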